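/- For all real numbers x, y, z, t, q, p, the matrix P = x·Γ_x + y·Γ_y + z·Γ_z + t·Γ_t + q·Γ_q + p·Γ_p satisfies trace(P) = 0 and P² = (x² + y² + z² + q² − p² − t²) · I₄. -/

import Mathlib

open Quaternion Matrix

/-- The split quaternions, with K = i, L = j, KL = k. -/
notation "ℍ'" => QuaternionAlgebra ℝ (-1) 0 1

/-- A = ℍ' ⊗_ℝ ℂ, realized as the quaternion algebra over ℂ with i² = −1, j² = 1. -/
abbrev SplitQC := QuaternionAlgebra ℂ (-1) 0 1

namespace SplitQC
/-- K, the split-quaternion unit with K² = −1 -/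
def K : SplitQC := ⟨0, 1, 0, 0⟩
/-- L, the split-quaternion unit with L² = 1 -/
def L : SplitQC := ⟨0, 0, 1, 0⟩
/-- KL, with (KL)² = 1 -/
def KL : SplitQC := ⟨0, 0, 0, 1⟩
/-- ℓ = 1 ⊗ i, the complex unit -/
def ll : SplitQC := ⟨Complex.I, 0, 0, 0⟩
end SplitQC

open SplitQC

/-- Index set {x, y, z, t, q, p} for the gamma matrices. -/
inductive Idx | x | y | z | t | q | p
deriving DecidableEq

/-- The gamma matrices generating Cl(4,2). -/
def Γ : Idx → Matrix (Fin 4) (Fin 4) SplitQC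
| Idx.x => !![0,0,0,1; 0,0,1,0; 0,1,0,0; 1,0,0,0]
| Idx.y => !![0,0,0,-ll; 0,0,ll,0; 0,-ll,0,0; ll,0,0,0]
| Idx.z => !![0,0,1,0; 0,0,0,-1; 1,0,0,0; 0,-1,0,0]
| Idx.t => !![0,0,L,0; 0,0,0,L; -L,0,0,0; 0,-L,0,0]
| Idx.q => !![0,0,K,0; 0,0,0,K; -K,0,0,0; 0,-K,0,0]
| Idx.p => !![0,0,KL,0; 0,0,0,KL; -KL,0,0,0; 0,-KL,0,0]

/-- The metric of signature (4,2). -/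
def g : Idx → Idx → ℝ
| Idx.x, Idx.x => 1 | Idx.y, Idx.y => 1 | Idx.z, Idx.z => 1 | Idx.q, Idx.q => 1
| Idx.t, Idx.t => -1 | Idx.p, Idx.p => -1
| _, _ => 0

/-!
The six matrices Γ_a satisfy the Clifford relations Γ_a Γ_b + Γ_b Γ_a = 2 g_ab for the metric g
of signature (4,2); this only uses the multiplication table of K, L, KL and the centrality of ℓ.
Squaring P = Σ c_a Γ_a and symmetrising in the two summation indices then gives
P² = (Σ g_ab c_a c_b) • 1. Each Γ_a is block off-diagonal, hence trace-free.
-/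

theorem sq_sum_smul_eq_of_anticomm {R A ι : Type*} [CommRing R] [Invertible (2 : R)] [Ring A]
    [Algebra R A] [Fintype ι] (e : ι → A) (Q : ι → ι → R)
    (he : ∀ i j, e i * e j + e j * e i = (2 * Q i j) • 1) (c : ι → R) :
    (∑ i, c i • e i) ^ 2 = (∑ i, ∑ j, Q i j * c i * c j) • 1 := by
  set S := ∑ i, c i • e i
  have hsq : S ^ 2 = ∑ i, ∑ j, (c i * c j) • (e i * e j) := by
    simp only [sq, S, Finset.sum_mul, Finset.mul_sum, smul_mul_smul_comm]
    exact Finset.sum_comm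
  have hsq_swap : S ^ 2 = ∑ i, ∑ j, (c i * c j) • (e j * e i) := by
    rw [hsq, Finset.sum_comm]
    simp only [mul_comm (c _) (c _)]
  have h2 : (2 : R) • S ^ 2 = (2 : R) • ((∑ i, ∑ j, Q i j * c i * c j) • 1) := by
    calc (2 : R) • S ^ 2 = S ^ 2 + S ^ 2 := two_smul R _
      _ = ∑ i, ∑ j, (c i * c j) • (e i * e j + e j * e i) := by
        nth_rw 2 [hsq_swap]
        simp only [hsq, smul_add, Finset.sum_add_distrib]
      _ = (2 : R) • ((∑ i, ∑ j, Q i j * c i * c j) • 1) := by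
        simp only [he, smul_smul, Finset.sum_smul, Finset.smul_sum]
        congr! 3; ring
  simpa only [smul_smul, ← mul_assoc, invOf_mul_self, one_mul, one_smul] using
    congrArg (⅟(2 : R) • ·) h2

namespace SplitQC

@[simp] lemma K_mul_K : K * K = -1 := by ext <;> simp [K]
@[simp] lemma L_mul_L : L * L = 1 := by ext <;> simp [L]
@[simp] lemma KL_mul_KL : KL * KL = 1 := by ext <;> simp [KL]
@[simp] lemma K_mul_L : K * L = KL := by ext <;> simp [K, L, KL]
@[simp] lemma L_mul_K : L * K = -KL := by ext <;> simp [K, L, KL]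
@[simp] lemma K_mul_KL : K * KL = -L := by ext <;> simp [K, L, KL]
@[simp] lemma KL_mul_K : KL * K = L := by ext <;> simp [K, L, KL]
@[simp] lemma L_mul_KL : L * KL = -K := by ext <;> simp [K, L, KL]
@[simp] lemma KL_mul_L : KL * L = K := by ext <;> simp [K, L, KL]
@[simp] lemma ll_mul_ll : ll * ll = -1 := by ext <;> simp [ll]

lemma ll_mul_comm (a : SplitQC) : ll * a = a * ll := by ext <;> simp [ll] <;> ring

end SplitQC

lemma Matrix.one_fin_four {α : Type*} [Zero α] [One α] :
    (1 : Matrix (Fin 4) (Fin 4) α) = !![1, 0, 0, 0; 0, 1, 0, 0; 0, 0, 1, 0; 0, 0, 0, 1] := by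
  ext i j
  fin_cases i <;> fin_cases j <;> rfl

namespace Idx

instance : Fintype Idx :=
  ⟨⟨{x, y, z, t, q, p}, by decide⟩, fun i => by cases i <;> decide⟩

lemma sum_univ {M : Type*} [AddCommMonoid M] (f : Idx → M) :
    ∑ i, f i = f x + f y + f z + f t + f q + f p := by
  simp [Finset.sum, Finset.univ, Fintype.elems, add_assoc]

end Idx

theorem Γ_mul_add_mul (a b : Idx) : Γ a * Γ b + Γ b * Γ a = (2 * g a b) • 1 := by
  cases a <;> cases b <;>
    simp [Γ, g, ll_mul_comm, Matrix.one_fin_four, two_smul, ← Matrix.of_zero,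
      Matrix.cons_eq_zero_iff]

lemma trace_Γ (a : Idx) : (Γ a).trace = 0 := by
  cases a <;> simp [Γ, Matrix.trace, Fin.sum_univ_four]

/-- For real x, y, z, t, q, p, the matrix P = x Γ_x + y Γ_y + z Γ_z + t Γ_t + q Γ_q + p Γ_p
is trace free and P² = (x² + y² + z² + q² − p² − t²) I₄. -/
theorem traceP_eq_zero_and_P_sq (x y z t q p : ℝ) :
    Matrix.trace (x • Γ Idx.x + y • Γ Idx.y + z • Γ Idx.z +
      t • Γ Idx.t + q • Γ Idx.q + p • Γ Idx.p) = 0 ∧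
    (x • Γ Idx.x + y • Γ Idx.y + z • Γ Idx.z +
      t • Γ Idx.t + q • Γ Idx.q + p • Γ Idx.p) ^ 2 =
      (x ^ 2 + y ^ 2 + z ^ 2 + q ^ 2 - p ^ 2 - t ^ 2) •
        (1 : Matrix (Fin 4) (Fin 4) SplitQC) := by
  let c : Idx → ℝ
    | .x => x | .y => y | .z => z | .t => t | .q => q | .p => p
  have hP : x • Γ Idx.x + y • Γ Idx.y + z • Γ Idx.z + t • Γ Idx.t + q • Γ Idx.q + p • Γ Idx.p =
      ∑ i, c i • Γ i := by
    rw [Idx.sum_univ]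
  refine ⟨by simp [Matrix.trace_add, Matrix.trace_smul, trace_Γ], ?_⟩
  rw [hP, sq_sum_smul_eq_of_anticomm Γ g Γ_mul_add_mul c]
  congr 1
  simp [Idx.sum_univ, g, c]
  ring
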